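/- arXiv:2510.18961 — 5 statements merged into one kernel-verified Lean document; each statement's English description precedes it below -/
import Mathlib

section
/- Let C be a small category, W a class of morphisms of C, and L : C ⥤ D a localization functor of C with respect to W. Then the left Kan extension functor L_! : (C ⥤ Type) ⥤ (D ⥤ Type) along L (the left adjoint of precomposition with L) is itself a localization functor of the functor category (C ⥤ Type) with respect to the class of those natural transformations that L_! sends to isomorphisms; in particular (D ⥤ Type) is equivalent to a reflective full subcategory of (C ⥤ Type). -/
open CategoryTheory Limits

universe u

/-- Let `C` be a small category, `W` a class of morphisms of `C`, and
`L : C ⥤ D` a localization functor with respect to `W`. Then the left Kan extension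
functor `L₁ : (C ⥤ Type) ⥤ (D ⥤ Type)` along `L` is itself a localization functor of
`C ⥤ Type` with respect to the class of those natural transformations that `L₁` sends
to isomorphisms; in particular `D ⥤ Type` is equivalent to a reflective full
subcategory of `C ⥤ Type` (precomposition with `L` is fully faithful with a left
adjoint). -/
theorem statement1 {C : Type u} [SmallCategory C] {D : Type u} [SmallCategory D]
    (W : MorphismProperty C) (L : C ⥤ D) [L.IsLocalization W] :
    (Functor.lan L : (C ⥤ Type u) ⥤ (D ⥤ Type u)).IsLocalization
      ((MorphismProperty.isomorphisms (D ⥤ Type u)).inverseImage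
        (Functor.lan L : (C ⥤ Type u) ⥤ (D ⥤ Type u))) ∧
    Nonempty (Reflective ((Functor.whiskeringLeft C D (Type u)).obj L)) := by
  -- Precomposition with a localization functor is fully faithful, so its left adjoint
  -- `lan L` is a reflector, and every reflector localizes at the maps it inverts.
  have := Localization.full_whiskeringLeft L W (Type u)
  have := Localization.faithful_whiskeringLeft L W (Type u)
  exact ⟨(L.lanAdjunction (Type u)).isLocalization, ⟨⟨_, L.lanAdjunction (Type u)⟩⟩⟩
end

section
/- Let O be a category and G : O ⥤ Cat a functor such that for every object x of O the category G.obj x is a groupoid. Then every morphism of the Grothendieck construction Grothendieck G is strongly cocartesian with respect to the forgetful functor Grothendieck G ⥤ O. -/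
open CategoryTheory Functor

universe v' u' v u

namespace CategoryTheory.Grothendieck

variable {C : Type*} [Category* C] {F : C ⥤ Cat}

lemma isHomLift_forget_iff {X Y : Grothendieck F} {f : X.base ⟶ Y.base} {φ : X ⟶ Y} :
    (forget F).IsHomLift f φ ↔ φ.base = f :=
  ⟨fun h ↦ (@IsHomLift.eq_of_isHomLift _ _ _ _ (forget F) X Y f φ h).symm,
    by rintro rfl; exact IsHomLift.map (forget F) φ⟩

/-- A lift `χ` of `g` with `φ ≫ χ = φ'` must satisfy `F(g)(φ.fiber) ≫ χ.fiber = φ'.fiber`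
(up to `eqToHom`), so invertibility of `φ.fiber` both produces and pins down `χ.fiber`. -/
instance isStronglyCocartesian_of_isIso_fiber {X Y : Grothendieck F} (φ : X ⟶ Y)
    [IsIso φ.fiber] : (forget F).IsStronglyCocartesian φ.base φ where
  toIsHomLift := IsHomLift.map (forget F) φ
  universal_property' := by
    intro Z (g : Y.base ⟶ Z.base) φ' hφ'
    have hbase : φ'.base = φ.base ≫ g := isHomLift_forget_iff.mp hφ'
    refine ⟨⟨g, (F.map g).toFunctor.map (inv φ.fiber) ≫ eqToHom (by simp [hbase]) ≫ φ'.fiber⟩,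
      ⟨isHomLift_forget_iff.mpr rfl, ?_⟩, ?_⟩
    · apply Grothendieck.ext _ _ (by rw [comp_base]; exact hbase.symm)
      simp only [comp_fiber, Functor.map_inv, IsIso.hom_inv_id_assoc]
      erw [eqToHom_trans_assoc, eqToHom_trans_assoc]
      simp only [eqToHom_refl, Category.id_comp]
    · rintro χ ⟨hχ, rfl⟩
      obtain rfl : χ.base = g := isHomLift_forget_iff.mp hχ
      apply Grothendieck.ext _ _ (by rfl)
      simp only [comp_fiber, eqToHom_refl, Category.id_comp, Functor.map_inv, IsIso.eq_inv_comp]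
      erw [eqToHom_trans_assoc]
      simp only [eqToHom_refl, Category.id_comp]

end CategoryTheory.Grothendieck

/-- Let `G : O ⥤ Cat` be a functor such that each category `G.obj x` is a
groupoid (i.e. all of its morphisms are isomorphisms). Then every morphism of the
Grothendieck construction `Grothendieck G` is strongly cocartesian with respect to the
forgetful functor `Grothendieck G ⥤ O`. -/
theorem statement3 {O : Type u} [Category.{v} O] (G : O ⥤ Cat.{v', u'})
    (hgpd : ∀ (x : O) {a b : G.obj x} (f : a ⟶ b), IsIso f)
    {X Y : Grothendieck G} (φ : X ⟶ Y) :
    (Grothendieck.forget G).IsStronglyCocartesian ((Grothendieck.forget G).map φ) φ :=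
  have := hgpd Y.base φ.fiber
  Grothendieck.isStronglyCocartesian_of_isIso_fiber φ
end

section
/- Let C be a category admitting an initial object. Then the unique functor from C to the terminal category (the discrete category on PUnit) is a localization functor of C with respect to the class of all morphisms of C. -/
open CategoryTheory Limits

universe w v u

lemma star_isLocalization_of_terminal {A : Type u} [Category.{v} A] [HasTerminal A] :
    (Functor.star A : A ⥤ Discrete PUnit.{w + 1}).IsLocalization
      (⊤ : MorphismProperty A) := by
  let F : Discrete PUnit.{w + 1} ⥤ A := Functor.fromPUnit (⊤_ A)
  haveI : F.Full :=
    ⟨fun {X Y} f => ⟨eqToHom (Subsingleton.elim _ _), terminalIsTerminal.hom_ext _ _⟩⟩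
  haveI : F.Faithful := ⟨fun {X Y} f g _ => Subsingleton.elim _ _⟩
  let adj : (Functor.star A : A ⥤ Discrete PUnit.{w + 1}) ⊣ F :=
    Adjunction.mkOfHomEquiv
      { homEquiv := fun X P =>
          { toFun := fun _ => terminal.from X
            invFun := fun _ => eqToHom (Subsingleton.elim _ _)
            left_inv := fun _ => Subsingleton.elim _ _
            right_inv := fun _ => terminalIsTerminal.hom_ext _ _ }
        homEquiv_naturality_left_symm := fun _ _ => Subsingleton.elim _ _
        homEquiv_naturality_right := fun _ _ => terminalIsTerminal.hom_ext _ _ }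
  have heq : (MorphismProperty.isomorphisms (Discrete PUnit.{w + 1})).inverseImage
      (Functor.star A) = ⊤ := by
    apply le_antisymm le_top
    intro X Y f _
    exact inferInstanceAs (IsIso ((Functor.star A).map f))
  exact heq ▸ adj.isLocalization

/-- If a category `C` admits an initial object, then the unique functor
from `C` to the terminal category (the discrete category on `PUnit`) is a localization
functor of `C` with respect to the class of all morphisms of `C` (i.e. the groupoid
completion of `C` is trivial). -/
theorem statement4 {C : Type u} [Category.{v} C] [HasInitial C] :
    (Functor.star C : C ⥤ Discrete PUnit.{w + 1}).IsLocalization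
      (⊤ : MorphismProperty C) := by
  haveI h : (Functor.star Cᵒᵖ : Cᵒᵖ ⥤ Discrete PUnit.{w + 1}).IsLocalization
      (⊤ : MorphismProperty Cᵒᵖ) := star_isLocalization_of_terminal
  haveI hop : (Functor.star Cᵒᵖ : Cᵒᵖ ⥤ Discrete PUnit.{w + 1}).op.IsLocalization
      (⊤ : MorphismProperty Cᵒᵖ).op := inferInstance
  haveI : CatCommSq (opOpEquivalence C).functor (Functor.star Cᵒᵖ).op
      (Functor.star C : C ⥤ Discrete PUnit.{w + 1})
      (Discrete.opposite PUnit.{w + 1}).functor := ⟨Functor.punitExt _ _⟩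
  exact Functor.IsLocalization.of_equivalences (Functor.star Cᵒᵖ).op
    (⊤ : MorphismProperty Cᵒᵖ).op
    (Functor.star C) ⊤ (opOpEquivalence C) (Discrete.opposite PUnit.{w + 1})
    (fun X Y f _ => ⟨_, _, (opOpEquivalence C).functor.map f, trivial, ⟨Iso.refl _⟩⟩)
    (fun X Y f _ => inferInstanceAs (IsIso ((Functor.star C).map f)))
end

section
/- Let C be a small monoidal category, W a class of morphisms of C containing all identity morphisms, and L : C ⥤ D a localization functor of C with respect to W. Write L_! : (C ⥤ Type) ⥤ (D ⥤ Type) for left Kan extension along L and ⊛ for the Day convolution product on C ⥤ Type. Assume that for every f : c₁ ⟶ c₁' in W and every g : c₂ ⟶ c₂' in W, the natural transformation of corepresentable functors Hom_C(c₁' ⊗ c₂', −) ⟶ Hom_C(c₁ ⊗ c₂, −) induced by f ⊗ g is sent by L_! to an isomorphism. Then for all natural transformations α : F ⟶ F' and β : G ⟶ G' in C ⥤ Type such that L_! α and L_! β are isomorphisms, the induced map on Day convolutions α ⊛ β : F ⊛ G ⟶ F' ⊛ G' is also sent by L_! to an isomorphism. -/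
/-!
Since `L^*` identifies `D ⥤ Type` with the functors `C ⥤ Type` inverting `W`, the adjunction
`L_! ⊣ L^*` shows that `L_!` inverts `η : F ⟶ F'` exactly when `η` is local with respect to the
`W`-inverting functors `Φ`, i.e. `(F' ⟶ Φ) → (F ⟶ Φ)` is bijective. By Yoneda, the hypothesis on
corepresentables says that every such `Φ` inverts `f ⊗ g` for `f, g ∈ W`, i.e. `tensor C ⋙ Φ`
inverts `W.prod W`. By the adjunction `⊗_! ⊣ ⊗^*` it then suffices that `α ⊠ β` is local with
respect to the functors `Ψ` inverting `W.prod W`. Write `α ⊠ β = (α ⊠ 1) ≫ (1 ⊠ β)` and curry: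
maps `F ⊠ H ⟶ Ψ` are maps `F ⟶ (c ↦ Hom(H, Ψ(c, -)))`, and this target inverts `W` because `W`
contains the identities, so locality of `α` gives that of `α ⊠ 1`; symmetrically for `1 ⊠ β`.
-/

open CategoryTheory MonoidalCategory Opposite Limits

universe u

namespace DayStatement

variable {C : Type u} [SmallCategory C] [MonoidalCategory C]


/-- The external product `(x, y) ↦ F x × G y` of two `Type`-valued functors. -/
@[simps]
def extProd (F G : C ⥤ Type u) : C × C ⥤ Type u where
  obj p := F.obj p.1 × G.obj p.2
  map f := TypeCat.ofHom fun x => (F.map f.1 x.1, G.map f.2 x.2)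

/-- The external product of two natural transformations. -/
@[simps]
def extProdMap {F F' G G' : C ⥤ Type u} (α : F ⟶ F') (β : G ⟶ G') :
    extProd F G ⟶ extProd F' G' where
  app p := TypeCat.ofHom fun x => (α.app p.1 x.1, β.app p.2 x.2)
  naturality := by
    intro p q f
    ext x
    change (α.app q.1 (F.map f.1 x.1), β.app q.2 (G.map f.2 x.2)) = (F'.map f.1 (α.app p.1 x.1), G'.map f.2 (β.app p.2 x.2))
    simp [NatTrans.naturality_apply]

/-- The Day convolution `F ⊛ G`: the pointwise left Kan extension of the external
product of `F` and `G` along the tensor product functor `⊗ : C × C ⥤ C`. -/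
noncomputable def day (F G : C ⥤ Type u) : C ⥤ Type u :=
  ((tensor C).lan).obj (extProd F G)

/-- Functoriality of the Day convolution. -/
noncomputable def dayMap {F F' G G' : C ⥤ Type u} (α : F ⟶ F') (β : G ⟶ G') :
    day F G ⟶ day F' G' :=
  ((tensor C).lan).map (extProdMap α β)

end DayStatement

lemma Function.Bijective.iff_of_comp_equiv {α α' β β' : Sort*} (eα : α ≃ α') (eβ : β ≃ β')
    {f : α → β} {f' : α' → β'} (h : f' ∘ eα = eβ ∘ f) : f'.Bijective ↔ f.Bijective := by
  rw [← eα.bijective_comp, h, eβ.comp_bijective]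

namespace CategoryTheory

universe w

variable {C D : Type*} [Category* C] [Category* D]

lemma Adjunction.bijective_precomp_map_iff {G : C ⥤ D} {F : D ⥤ C} (adj : G ⊣ F)
    {X Y : C} (f : X ⟶ Y) (Z : D) :
    Function.Bijective (fun g : G.obj Y ⟶ Z => G.map f ≫ g) ↔
      Function.Bijective (fun g : Y ⟶ F.obj Z => f ≫ g) :=
  Function.Bijective.iff_of_comp_equiv (adj.homEquiv Y Z).symm (adj.homEquiv X Z).symm
    (funext fun g => (adj.homEquiv_naturality_left_symm f g).symm)

lemma ObjectProperty.isLocal_map_of_adjunction {G : C ⥤ D} {F : D ⥤ C} (adj : G ⊣ F)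
    {P : ObjectProperty D} {Q : ObjectProperty C} (hPQ : ∀ Z, P Z → Q (F.obj Z))
    {X Y : C} {f : X ⟶ Y} (hf : Q.isLocal f) : P.isLocal (G.map f) := fun Z hZ =>
  (adj.bijective_precomp_map_iff f Z).2 (hf _ (hPQ Z hZ))

lemma ObjectProperty.isIso_map_of_isLocal_coyoneda_map {C : Type*} [Category.{w} C]
    {P : ObjectProperty (C ⥤ Type w)} {X Y : C} {f : X ⟶ Y} (hf : P.isLocal (coyoneda.map f.op))
    {Φ : C ⥤ Type w} (hΦ : P Φ) :
    IsIso (Φ.map f) := by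
  rw [isIso_iff_bijective]
  exact (Function.Bijective.iff_of_comp_equiv coyonedaEquiv coyonedaEquiv
    (funext fun τ => coyonedaEquiv_naturality τ f)).2 (hf Φ hΦ)

lemma MorphismProperty.isoClosure_range_whiskeringLeft_obj (W : MorphismProperty C) (L : C ⥤ D)
    [L.IsLocalization W] (E : Type*) [Category* E] :
    ObjectProperty.isoClosure (· ∈ Set.range ((Functor.whiskeringLeft C D E).obj L).obj) =
      W.IsInvertedBy := by
  ext Φ
  constructor
  · rintro ⟨_, ⟨K, rfl⟩, ⟨e⟩⟩
    exact (MorphismProperty.IsInvertedBy.iff_of_iso W e).2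
      (MorphismProperty.IsInvertedBy.of_comp W L (Localization.inverts L W) K)
  · intro hΦ
    exact ⟨_, ⟨Localization.lift Φ hΦ L, rfl⟩, ⟨(Localization.fac Φ hΦ L).symm⟩⟩

lemma Functor.isIso_lan_map_iff_isLocal (W : MorphismProperty C) (L : C ⥤ D)
    [L.IsLocalization W] {E : Type*} [Category* E] [∀ F : C ⥤ E, L.HasLeftKanExtension F]
    {F F' : C ⥤ E} (η : F ⟶ F') :
    IsIso (L.lan.map η) ↔ ObjectProperty.isLocal W.IsInvertedBy η := by
  have := Localization.full_whiskeringLeft L W E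
  have := Localization.faithful_whiskeringLeft L W E
  rw [← ObjectProperty.isLocal_iff_isIso_map (L.lanAdjunction E),
    ← ObjectProperty.isoClosure_isLocal,
    MorphismProperty.isoClosure_range_whiskeringLeft_obj W L E]

end CategoryTheory

namespace DayStatement

section Currying

variable {C : Type u} [SmallCategory C] (Ψ : C × C ⥤ Type u)

def extHom₁ (H : C ⥤ Type u) : C ⥤ Type u :=
  Functor.curryObj Ψ ⋙ coyoneda.obj (op H)

def extHom₂ (A : C ⥤ Type u) : C ⥤ Type u :=
  (Functor.curryObj Ψ).flip ⋙ coyoneda.obj (op A)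

lemma extProd_naturality_apply {A H : C ⥤ Type u} (θ : extProd A H ⟶ Ψ) {p q : C × C} (f : p ⟶ q)
    (x : A.obj p.1) (y : H.obj p.2) :
    θ.app q (A.map f.1 x, H.map f.2 y) = Ψ.map f (θ.app p (x, y)) :=
  NatTrans.naturality_apply (X := p) (Y := q) θ f ((x, y) : A.obj p.1 × H.obj p.2)

def extProdHomEquiv₁ (A H : C ⥤ Type u) : (extProd A H ⟶ Ψ) ≃ (A ⟶ extHom₁ Ψ H) where
  toFun θ :=
    { app c₁ := TypeCat.ofHom fun x =>
        { app c₂ := TypeCat.ofHom fun y => θ.app (c₁, c₂) (x, y)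
          naturality _ _ g := by
            ext y
            change θ.app (c₁, _) (x, H.map g y) = Ψ.map (𝟙 c₁, g) (θ.app (c₁, _) (x, y))
            simpa using extProd_naturality_apply Ψ θ ((𝟙 c₁, g) : (c₁, _) ⟶ (c₁, _)) x y }
      naturality _ _ h := by
        ext x
        refine NatTrans.ext (funext fun c₂ => ?_)
        ext y
        change θ.app (_, c₂) (A.map h x, y) = Ψ.map (h, 𝟙 c₂) (θ.app (_, c₂) (x, y))
        simpa using extProd_naturality_apply Ψ θ ((h, 𝟙 c₂) : (_, c₂) ⟶ (_, c₂)) x y }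
  invFun ρ :=
    { app p := TypeCat.ofHom fun z => (ρ.app p.1 z.1).app p.2 z.2
      naturality p q f := by
        ext ⟨x, y⟩
        change (ρ.app q.1 (A.map f.1 x)).app q.2 (H.map f.2 y) = Ψ.map f ((ρ.app p.1 x).app p.2 y)
        rw [NatTrans.naturality_apply ρ f.1 x]
        change ((Functor.curryObj Ψ).map f.1).app q.2 ((ρ.app p.1 x).app q.2 (H.map f.2 y)) = _
        rw [NatTrans.naturality_apply (ρ.app p.1 x) f.2 y]
        change Ψ.map ((f.1, 𝟙 q.2) : (p.1, q.2) ⟶ q) (Ψ.map ((𝟙 p.1, f.2) : p ⟶ (p.1, q.2)) _) = _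
        rw [← Functor.map_comp_apply]
        congr
        exact Prod.ext (by simp) (by simp) }
  left_inv _ := rfl
  right_inv _ := rfl

def extProdHomEquiv₂ (A H : C ⥤ Type u) : (extProd A H ⟶ Ψ) ≃ (H ⟶ extHom₂ Ψ A) where
  toFun θ :=
    { app c₂ := TypeCat.ofHom fun y =>
        { app c₁ := TypeCat.ofHom fun x => θ.app (c₁, c₂) (x, y)
          naturality _ _ h := by
            ext x
            change θ.app (_, c₂) (A.map h x, y) = Ψ.map (h, 𝟙 c₂) (θ.app (_, c₂) (x, y))
            simpa using extProd_naturality_apply Ψ θ ((h, 𝟙 c₂) : (_, c₂) ⟶ (_, c₂)) x y }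
      naturality _ _ g := by
        ext y
        refine NatTrans.ext (funext fun c₁ => ?_)
        ext x
        change θ.app (c₁, _) (x, H.map g y) = Ψ.map (𝟙 c₁, g) (θ.app (c₁, _) (x, y))
        simpa using extProd_naturality_apply Ψ θ ((𝟙 c₁, g) : (c₁, _) ⟶ (c₁, _)) x y }
  invFun ρ :=
    { app p := TypeCat.ofHom fun z => (ρ.app p.2 z.2).app p.1 z.1
      naturality p q f := by
        ext ⟨x, y⟩
        change (ρ.app q.2 (H.map f.2 y)).app q.1 (A.map f.1 x) = Ψ.map f ((ρ.app p.2 y).app p.1 x)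
        rw [NatTrans.naturality_apply ρ f.2 y]
        change ((Functor.curryObj Ψ).flip.map f.2).app q.1 ((ρ.app p.2 y).app q.1 (A.map f.1 x)) = _
        rw [NatTrans.naturality_apply (ρ.app p.2 y) f.1 x]
        change Ψ.map ((𝟙 q.1, f.2) : (q.1, p.2) ⟶ q) (Ψ.map ((f.1, 𝟙 p.2) : p ⟶ (q.1, p.2)) _) = _
        rw [← Functor.map_comp_apply]
        congr
        exact Prod.ext (by simp) (by simp) }
  left_inv _ := rfl
  right_inv _ := rfl

variable (W : MorphismProperty C) [W.ContainsIdentities] {Ψ}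

lemma isInvertedBy_extHom₁ (hΨ : (W.prod W).IsInvertedBy Ψ) (H : C ⥤ Type u) :
    W.IsInvertedBy (extHom₁ Ψ H) := by
  refine MorphismProperty.IsInvertedBy.of_comp W _ (fun c₁ c₁' h hh => ?_) _
  have (c₂ : C) : IsIso (((Functor.curryObj Ψ).map h).app c₂) :=
    hΨ _ ⟨hh, W.id_mem c₂⟩
  exact NatIso.isIso_of_isIso_app ((Functor.curryObj Ψ).map h)

lemma isInvertedBy_extHom₂ (hΨ : (W.prod W).IsInvertedBy Ψ) (A : C ⥤ Type u) :
    W.IsInvertedBy (extHom₂ Ψ A) := by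
  refine MorphismProperty.IsInvertedBy.of_comp W _ (fun c₂ c₂' g hg => ?_) _
  have (c₁ : C) : IsIso (((Functor.curryObj Ψ).flip.map g).app c₁) :=
    hΨ _ ⟨W.id_mem c₁, hg⟩
  exact NatIso.isIso_of_isIso_app ((Functor.curryObj Ψ).flip.map g)

variable {W}

lemma isLocal_extProdMap_id_right {F F' : C ⥤ Type u} {α : F ⟶ F'}
    (hα : ObjectProperty.isLocal W.IsInvertedBy α) (H : C ⥤ Type u) :
    ObjectProperty.isLocal (W.prod W).IsInvertedBy (extProdMap α (𝟙 H)) := fun Ψ hΨ =>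
  -- the currying equivalences are natural in the curried variable by definition
  (Function.Bijective.iff_of_comp_equiv (extProdHomEquiv₁ Ψ F' H) (extProdHomEquiv₁ Ψ F H)
    rfl).1 (hα _ (isInvertedBy_extHom₁ W hΨ H))

lemma isLocal_extProdMap_id_left {G G' : C ⥤ Type u} {β : G ⟶ G'}
    (hβ : ObjectProperty.isLocal W.IsInvertedBy β) (A : C ⥤ Type u) :
    ObjectProperty.isLocal (W.prod W).IsInvertedBy (extProdMap (𝟙 A) β) := fun Ψ hΨ =>
  (Function.Bijective.iff_of_comp_equiv (extProdHomEquiv₂ Ψ A G') (extProdHomEquiv₂ Ψ A G)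
    rfl).1 (hβ _ (isInvertedBy_extHom₂ W hΨ A))

lemma isLocal_extProdMap {F F' G G' : C ⥤ Type u} {α : F ⟶ F'} {β : G ⟶ G'}
    (hα : ObjectProperty.isLocal W.IsInvertedBy α) (hβ : ObjectProperty.isLocal W.IsInvertedBy β) :
    ObjectProperty.isLocal (W.prod W).IsInvertedBy (extProdMap α β) :=
  MorphismProperty.comp_mem _ _ _ (isLocal_extProdMap_id_right hα G)
    (isLocal_extProdMap_id_left hβ F')

end Currying

variable {C : Type u} [SmallCategory C] [MonoidalCategory C]

lemma isLocal_dayMap {W : MorphismProperty C} [W.ContainsIdentities]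
    (hW : ∀ Φ : C ⥤ Type u, W.IsInvertedBy Φ → (W.prod W).IsInvertedBy (tensor C ⋙ Φ))
    {F F' G G' : C ⥤ Type u} {α : F ⟶ F'} {β : G ⟶ G'}
    (hα : ObjectProperty.isLocal W.IsInvertedBy α) (hβ : ObjectProperty.isLocal W.IsInvertedBy β) :
    ObjectProperty.isLocal W.IsInvertedBy (dayMap α β) :=
  ObjectProperty.isLocal_map_of_adjunction ((tensor C).lanAdjunction (Type u)) hW
    (isLocal_extProdMap hα hβ)

/-- Let `C` be a small monoidal category, `W` a class of morphisms of
`C` containing all identities, and `L : C ⥤ D` a localization functor of `C` with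
respect to `W`; let `L₁` denote left Kan extension along `L` and `⊛` the Day
convolution on `C ⥤ Type`.  If for all `f : c₁ ⟶ c₁'` and `g : c₂ ⟶ c₂'` in `W` the
induced map of corepresentables `Hom_C(c₁' ⊗ c₂', −) ⟶ Hom_C(c₁ ⊗ c₂, −)` is inverted
by `L₁`, then for all `α : F ⟶ F'` and `β : G ⟶ G'` inverted by `L₁`, the induced map
`α ⊛ β : F ⊛ G ⟶ F' ⊛ G'` on Day convolutions is also inverted by `L₁`. -/
theorem statement6 {D : Type u} [SmallCategory D]
    (W : MorphismProperty C) [W.ContainsIdentities] (L : C ⥤ D) [L.IsLocalization W]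
    (hW : ∀ {c₁ c₁' c₂ c₂' : C} (f : c₁ ⟶ c₁') (g : c₂ ⟶ c₂'), W f → W g →
      IsIso ((Functor.lan L : (C ⥤ Type u) ⥤ (D ⥤ Type u)).map
        (coyoneda.map (Quiver.Hom.op (f ⊗ₘ g)))))
    {F F' G G' : C ⥤ Type u} (α : F ⟶ F') (β : G ⟶ G')
    (hα : IsIso ((Functor.lan L : (C ⥤ Type u) ⥤ (D ⥤ Type u)).map α))
    (hβ : IsIso ((Functor.lan L : (C ⥤ Type u) ⥤ (D ⥤ Type u)).map β)) :
    IsIso ((Functor.lan L : (C ⥤ Type u) ⥤ (D ⥤ Type u)).map (dayMap α β)) := by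
  have htensor (Φ : C ⥤ Type u) (hΦ : W.IsInvertedBy Φ) : (W.prod W).IsInvertedBy (tensor C ⋙ Φ) :=
    fun _ _ fg hfg => ObjectProperty.isIso_map_of_isLocal_coyoneda_map
      ((L.isIso_lan_map_iff_isLocal W _).1 (hW fg.1 fg.2 hfg.1 hfg.2)) hΦ
  rw [L.isIso_lan_map_iff_isLocal W] at hα hβ ⊢
  exact isLocal_dayMap htensor hα hβ

end DayStatement
end

section
/- Let M be a monoidal category, let i : M₀ ⥤ M be the inclusion of a full reflective subcategory with reflector a : M ⥤ M₀ (left adjoint to i). Assume that for every morphism f of M such that a.map f is an isomorphism and every object m of M, both a.map (f ▷) := a.map (f ⊗ 𝟙 m) and a.map (𝟙 m ⊗ f) are isomorphisms. Then M₀ admits a monoidal category structure with tensor product X ⊗₀ Y = a.obj (i.obj X ⊗ i.obj Y) and unit a.obj (𝟙_M), and the reflector a admits the structure of a strong monoidal functor from M to M₀. -/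
/-!
The morphisms inverted by the reflector `a` form a class `W` that the hypothesis makes stable
under whiskering, and `a`, being left adjoint to a fully faithful functor, is a localization
functor for `W`. Localization of monoidal categories then makes `M₀` monoidal with `a` strong
monoidal. Its tensor product is only determined up to isomorphism, but the counit isomorphisms
`a (i X) ≅ X` identify `X ⊗ Y` with `a (i X ⊗ i Y)`, and transporting the structure along these
isomorphisms makes the tensor objects literally `a (i X ⊗ i Y)`.
-/

open CategoryTheory MonoidalCategory

universe v v' u u'

namespace CategoryTheory.Functor.FullyFaithful

variable {C : Type u} [Category.{v} C] [MonoidalCategory C] {D : Type u'} [Category.{v'} D]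
  {F : D ⥤ C} (hF : F.FullyFaithful) {T : D → D → D}
  (φ : ∀ X Y, F.obj (T X Y) ≅ F.obj X ⊗ F.obj Y) {U : D} (ε : F.obj U ≅ 𝟙_ C)

noncomputable abbrev monoidalCategoryStructOfTensorIso : MonoidalCategoryStruct D where
  tensorObj := T
  whiskerLeft X _ _ g := hF.preimage ((φ _ _).hom ≫ (F.obj X ◁ F.map g) ≫ (φ _ _).inv)
  whiskerRight f Y := hF.preimage ((φ _ _).hom ≫ (F.map f ▷ F.obj Y) ≫ (φ _ _).inv)
  tensorHom f g := hF.preimage ((φ _ _).hom ≫ (F.map f ⊗ₘ F.map g) ≫ (φ _ _).inv)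
  tensorUnit := U
  associator X Y Z := hF.preimageIso (φ _ _ ≪≫ whiskerRightIso (φ X Y) _ ≪≫ α_ _ _ _ ≪≫
    whiskerLeftIso _ (φ Y Z).symm ≪≫ (φ _ _).symm)
  leftUnitor _ := hF.preimageIso (φ _ _ ≪≫ whiskerRightIso ε _ ≪≫ λ_ _)
  rightUnitor _ := hF.preimageIso (φ _ _ ≪≫ whiskerLeftIso _ ε ≪≫ ρ_ _)

noncomputable def inducingFunctorDataOfTensorIso :
    letI := hF.monoidalCategoryStructOfTensorIso φ ε
    Monoidal.InducingFunctorData F :=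
  letI := hF.monoidalCategoryStructOfTensorIso φ ε
  { μIso X Y := (φ X Y).symm
    εIso := ε.symm
    whiskerLeft_eq _ _ _ _ := hF.map_preimage _
    whiskerRight_eq _ _ := hF.map_preimage _
    tensorHom_eq _ _ := hF.map_preimage _
    associator_eq _ _ _ := (hF.map_preimage _).trans (by simp; rfl)
    leftUnitor_eq _ := (hF.map_preimage _).trans (by simp; rfl)
    rightUnitor_eq _ := (hF.map_preimage _).trans (by simp; rfl) }

noncomputable abbrev monoidalCategoryOfTensorIso : MonoidalCategory D :=
  letI := hF.monoidalCategoryStructOfTensorIso φ ε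
  haveI := hF.faithful
  Monoidal.induced F (hF.inducingFunctorDataOfTensorIso φ ε)

noncomputable abbrev monoidalOfTensorIso :
    letI := hF.monoidalCategoryOfTensorIso φ ε
    F.Monoidal :=
  letI := hF.monoidalCategoryOfTensorIso φ ε
  haveI := hF.faithful
  (Monoidal.fromInducedCoreMonoidal F (hF.inducingFunctorDataOfTensorIso φ ε)).toMonoidal

end CategoryTheory.Functor.FullyFaithful

namespace CategoryTheory.MorphismProperty

variable {M : Type u} [Category.{v} M] [MonoidalCategory M] {M₀ : Type u'} [Category.{v'} M₀]
  {a : M ⥤ M₀}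

lemma isMonoidal_inverseImage_isomorphisms
    (h : ∀ {X Y : M} (f : X ⟶ Y), IsIso (a.map f) →
      ∀ m : M, IsIso (a.map (f ▷ m)) ∧ IsIso (a.map (m ◁ f))) :
    ((isomorphisms M₀).inverseImage a).IsMonoidal where
  whiskerLeft m _ _ f hf := (h f hf m).2
  whiskerRight f hf m := (h f hf m).1

end CategoryTheory.MorphismProperty

namespace CategoryTheory.Adjunction

variable {M : Type u} [Category.{v} M] [MonoidalCategory M]
  {M₀ : Type u'} [Category.{v'} M₀] {i : M₀ ⥤ M} {a : M ⥤ M₀}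
  (adj : a ⊣ i) [i.Full] [i.Faithful] (W : MorphismProperty M) [W.IsMonoidal] [a.IsLocalization W]

variable (a) in
def toLocalizedMonoidal : M₀ ⥤ LocalizedMonoidal a W (Iso.refl (a.obj (𝟙_ M))) := 𝟭 M₀

noncomputable def localizedTensorIso (X Y : M₀) :
    (toLocalizedMonoidal a W).obj (a.obj (i.obj X ⊗ i.obj Y)) ≅
      (toLocalizedMonoidal a W).obj X ⊗ (toLocalizedMonoidal a W).obj Y :=
  letI c (Z : M₀) : a.obj (i.obj Z) ≅ Z := asIso (adj.counit.app Z)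
  (Functor.Monoidal.μIso (Localization.Monoidal.toMonoidalCategory a W (Iso.refl _))
    (i.obj X) (i.obj Y)).symm ≪≫ tensorIso (c X) (c Y)

noncomputable abbrev reflectiveMonoidalCategory : MonoidalCategory M₀ :=
  (Functor.FullyFaithful.id M₀).monoidalCategoryOfTensorIso (F := toLocalizedMonoidal a W)
    (adj.localizedTensorIso W) (Iso.refl _)

noncomputable abbrev reflectorMonoidal :
    letI := adj.reflectiveMonoidalCategory W
    a.Monoidal :=
  letI := adj.reflectiveMonoidalCategory W
  let e : M₀ ≌ _ := Equivalence.mk (toLocalizedMonoidal a W) (𝟭 _) (Iso.refl _) (Iso.refl _)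
  letI : e.functor.Monoidal := (Functor.FullyFaithful.id M₀).monoidalOfTensorIso
    (F := toLocalizedMonoidal a W) (adj.localizedTensorIso W) (Iso.refl _)
  letI : e.inverse.Monoidal := e.inverseMonoidal
  -- `a ⋙ e.functor` is the monoidal localization functor, and `e` is a monoidal equivalence.
  e.monoidalOfPostcompFunctor (F' := Localization.Monoidal.toMonoidalCategory a W (Iso.refl _))
    a a.rightUnitor

end CategoryTheory.Adjunction

/-- **Statement 11** (Day's reflection theorem, 1-categorical form). Let `M` be a monoidal
category and `i : M₀ ⥤ M` the inclusion of a full reflective subcategory with reflector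
`a : M ⥤ M₀` (left adjoint to `i`). Assume that whiskering (on either side) with any
object of `M` preserves the morphisms inverted by `a`. Then `M₀` admits a monoidal
structure whose tensor product is `X ⊗₀ Y = a.obj (i.obj X ⊗ i.obj Y)` and whose unit is
`a.obj (𝟙_ M)`, and the reflector `a` admits the structure of a strong monoidal functor. -/
theorem statement11 {M : Type u} [Category.{v} M] [MonoidalCategory M]
    {M₀ : Type u'} [Category.{v'} M₀] (i : M₀ ⥤ M) [i.Full] [i.Faithful]
    (a : M ⥤ M₀) (adj : a ⊣ i)
    (h : ∀ {X Y : M} (f : X ⟶ Y), IsIso (a.map f) →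
      ∀ m : M, IsIso (a.map (f ▷ m)) ∧ IsIso (a.map (m ◁ f))) :
    ∃ S : MonoidalCategory M₀,
      (∀ X Y : M₀, S.tensorObj X Y = a.obj (i.obj X ⊗ i.obj Y)) ∧
      S.tensorUnit = a.obj (𝟙_ M) ∧
      Nonempty (@Functor.Monoidal M _ _ M₀ _ S a) := by
  let W := (MorphismProperty.isomorphisms M₀).inverseImage a
  have : a.IsLocalization W := adj.isLocalization
  have : W.IsMonoidal := MorphismProperty.isMonoidal_inverseImage_isomorphisms h
  exact ⟨adj.reflectiveMonoidalCategory W, fun _ _ => rfl, rfl, ⟨adj.reflectorMonoidal W⟩⟩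
end
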